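/- arXiv:1906.00473 — 3 statements merged into one kernel-verified Lean document; each statement's English description precedes it below -/
import Mathlib

section
/- Given distinct angles θ₁, …, θ_ℓ ∈ (0, π], there exists K ∈ ℕ (depending only on the θ_j) such that: for any real numbers r₁, …, r_ℓ and phases γ₁, …, γ_ℓ with the constraint that γ_j ∈ {0, π} whenever θ_j = π, there exists an integer i with 0 ≤ i ≤ K such that ∑_{j=1}^{ℓ} r_j cos(i θ_j + γ_j) ≤ −(1/4) max_j |r_j|. -/
/-!
Let `M = |r j₀|` be the largest amplitude, `s = r j₀ / M`, and weight the sum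
`f i = ∑ j, r j * cos (i * θ j + γ j)` by `w i = 1 - s * cos (i * θ j₀ + γ j₀) ≥ 0`.
By product-to-sum, `∑_{i<N} f i * w i` is `-M N / 2` (from the term `j = j₀`, frequency
`θ j₀ - θ j₀ = 0`) plus multiples of partial sums `∑_{i<N} cos (i * α + β)` with
`α ∈ {θ j, θ j ± θ j₀}`; these are bounded by `|sin (α / 2)|⁻¹` uniformly in `N`.
The only frequency that is a multiple of `2π` is `2 θ j₀ = 2π`; there the phase condition makes
every summand equal to `1`, so it only helps. If `f i > -M/4` for all `i < N`, the weighted sum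
is at least `-(M/4)(N + O(1))`, which is impossible once `N` exceeds a constant depending
only on `θ`.
-/

open Finset Real

noncomputable section

def cosSum (α β : ℝ) (N : ℕ) : ℝ := ∑ i ∈ range N, cos (i * α + β)

def cosSumBound (α : ℝ) : ℝ := |sin (α / 2)|⁻¹

lemma cosSumBound_nonneg (α : ℝ) : 0 ≤ cosSumBound α := inv_nonneg.2 (abs_nonneg _)

lemma abs_cosSum_le {α : ℝ} (h : sin (α / 2) ≠ 0) (β : ℝ) (N : ℕ) :
    |cosSum α β N| ≤ cosSumBound α := by
  have hsum : cosSum α β N = ∑ i ∈ range N, cos (α * i + β) := by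
    simp only [cosSum, mul_comm α]
  rw [cosSumBound, ← mul_one |sin (α / 2)|⁻¹, le_inv_mul_iff₀ (abs_pos.2 h), ← abs_mul, hsum,
    sin_mul_sum_cos, abs_mul]
  exact mul_le_one₀ (abs_sin_le_one _) (abs_nonneg _) (abs_cos_le_one _)

lemma cosSum_zero_zero (N : ℕ) : cosSum 0 0 N = N := by simp [cosSum]

lemma sin_half_ne_zero {α : ℝ} (h₀ : α ≠ 0) (h₁ : -(2 * π) < α) (h₂ : α < 2 * π) :
    sin (α / 2) ≠ 0 := by
  rw [Ne, sin_eq_zero_iff_of_lt_of_lt (by linarith) (by linarith)]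
  exact fun h => h₀ (by linarith)

lemma sin_half_ne_zero_of_mem_Ioc {a : ℝ} (ha : a ∈ Set.Ioc 0 π) : sin (a / 2) ≠ 0 :=
  sin_half_ne_zero ha.1.ne' (by linarith [ha.1, pi_pos]) (by linarith [ha.2, pi_pos])

lemma sin_half_sub_ne_zero {a b : ℝ} (ha : a ∈ Set.Ioc 0 π) (hb : b ∈ Set.Ioc 0 π) (hab : a ≠ b) :
    sin ((a - b) / 2) ≠ 0 :=
  sin_half_ne_zero (sub_ne_zero.2 hab) (by linarith [ha.1, hb.2, pi_pos])
    (by linarith [ha.2, hb.1, pi_pos])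

lemma sin_half_add_ne_zero {a b : ℝ} (ha : a ∈ Set.Ioc 0 π) (hb : b ∈ Set.Ioc 0 π) (hab : a ≠ b) :
    sin ((a + b) / 2) ≠ 0 := by
  have hlt : a + b < 2 * π := by
    rcases ha.2.lt_or_eq with ha' | rfl
    · linarith [hb.2]
    · linarith [hb.2.lt_of_ne hab.symm]
  exact sin_half_ne_zero (add_pos ha.1 hb.1).ne' (by linarith [ha.1, hb.1, pi_pos]) hlt

lemma neg_cosSumBound_le_cosSum_add_self {θ γ : ℝ} (hθ : θ ∈ Set.Ioc 0 π)
    (hγ : θ = π → γ = 0 ∨ γ = π) (N : ℕ) :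
    -cosSumBound (θ + θ) ≤ cosSum (θ + θ) (γ + γ) N := by
  rcases hθ.2.lt_or_eq with hlt | rfl
  · have h : sin ((θ + θ) / 2) ≠ 0 :=
      sin_half_ne_zero (add_pos hθ.1 hθ.1).ne' (by linarith [hθ.1, pi_pos]) (by linarith)
    exact neg_le_of_abs_le (abs_cosSum_le h _ N)
  · have hterm : ∀ i : ℕ, cos (i * (π + π) + (γ + γ)) = 1 := by
      intro i
      rcases hγ rfl with rfl | rfl
      · simpa [two_mul] using cos_nat_mul_two_pi i
      · simpa [two_mul, add_comm] using cos_add_nat_mul_two_pi (2 * π) i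
    have : cosSum (π + π) (γ + γ) N = N := by simp [cosSum, hterm]
    linarith [cosSumBound_nonneg (π + π), (N.cast_nonneg : (0 : ℝ) ≤ N)]

lemma mul_le_mul_of_abs_le {a b c d : ℝ} (hac : |a| ≤ c) (hbd : |b| ≤ d) : a * b ≤ c * d :=
  (le_abs_self _).trans <| (abs_mul a b).symm ▸
    mul_le_mul hac hbd (abs_nonneg b) ((abs_nonneg a).trans hac)

lemma neg_mul_le_sum_mul_weight {f : ℕ → ℝ} {c s α : ℝ} (β : ℝ) {N : ℕ} (hc : 0 ≤ c)
    (hs : |s| ≤ 1) (hα : sin (α / 2) ≠ 0) (hf : ∀ i < N, -c ≤ f i) :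
    -c * (N + cosSumBound α) ≤ ∑ i ∈ range N, f i * (1 - s * cos (i * α + β)) := by
  have hweight : ∀ i : ℕ, 0 ≤ 1 - s * cos (i * α + β) := fun i => by
    have := mul_le_mul_of_abs_le hs (abs_cos_le_one (i * α + β))
    linarith
  have hsum : ∑ i ∈ range N, (1 - s * cos (i * α + β)) ≤ N + cosSumBound α := by
    have := mul_le_mul_of_abs_le ((abs_neg s).trans_le hs) (abs_cosSum_le hα β N)
    rw [sum_sub_distrib, ← mul_sum, sum_const, card_range, nsmul_one]
    simp only [cosSum] at this
    linarith
  calc -c * (N + cosSumBound α) ≤ ∑ i ∈ range N, -c * (1 - s * cos (i * α + β)) := by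
        rw [← mul_sum]
        exact mul_le_mul_of_nonpos_left hsum (neg_nonpos.2 hc)
    _ ≤ ∑ i ∈ range N, f i * (1 - s * cos (i * α + β)) :=
        sum_le_sum fun i hi => mul_le_mul_of_nonneg_right (hf i (mem_range.1 hi)) (hweight i)

lemma cos_mul_one_sub_mul_cos (x y s : ℝ) :
    cos x * (1 - s * cos y) = cos x - s / 2 * (cos (x - y) + cos (x + y)) := by
  rw [cos_sub, cos_add]; ring

section

variable {ι : Type*} [Fintype ι] (θ γ r : ι → ℝ)

lemma sum_range_sum_mul_weight_eq (s α β : ℝ) (N : ℕ) :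
    ∑ i ∈ range N, (∑ j, r j * cos (i * θ j + γ j)) * (1 - s * cos (i * α + β)) =
      ∑ j, r j * (cosSum (θ j) (γ j) N -
        s / 2 * (cosSum (θ j - α) (γ j - β) N + cosSum (θ j + α) (γ j + β) N)) := by
  simp_rw [sum_mul, mul_assoc, cos_mul_one_sub_mul_cos]
  rw [sum_comm]
  refine sum_congr rfl fun j _ => ?_
  rw [cosSum, cosSum, cosSum, ← sum_add_distrib, mul_sum, ← sum_sub_distrib, mul_sum]
  refine sum_congr rfl fun i _ => ?_
  ring_nf

def trigSumConstant : ℝ :=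
  ∑ j, (cosSumBound (θ j) + ∑ k, (cosSumBound (θ j - θ k) + cosSumBound (θ j + θ k)))

lemma cosSumBound_le_trigSumConstant (j₀ : ι) : cosSumBound (θ j₀) ≤ trigSumConstant θ := by
  have hnonneg : ∀ j, 0 ≤ ∑ k, (cosSumBound (θ j - θ k) + cosSumBound (θ j + θ k)) :=
    fun j => sum_nonneg fun k _ => add_nonneg (cosSumBound_nonneg _) (cosSumBound_nonneg _)
  calc cosSumBound (θ j₀)
      ≤ cosSumBound (θ j₀) + ∑ k, (cosSumBound (θ j₀ - θ k) + cosSumBound (θ j₀ + θ k)) :=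
        le_add_of_nonneg_right (hnonneg j₀)
    _ ≤ trigSumConstant θ :=
        single_le_sum (f := fun j => cosSumBound (θ j) + _)
          (fun j _ => add_nonneg (cosSumBound_nonneg _) (hnonneg j)) (mem_univ j₀)

variable {θ γ r}

lemma sum_range_sum_mul_weight_le (hθ : ∀ j, θ j ∈ Set.Ioc 0 π) (hinj : Function.Injective θ)
    {j₀ : ι} (hγ : θ j₀ = π → γ j₀ = 0 ∨ γ j₀ = π) (hj₀ : ∀ j, |r j| ≤ |r j₀|) {s : ℝ}
    (hs : |s| ≤ 1) (hsr : s * r j₀ = |r j₀|) (N : ℕ) :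
    ∑ i ∈ range N, (∑ j, r j * cos (i * θ j + γ j)) * (1 - s * cos (i * θ j₀ + γ j₀)) ≤
      -(|r j₀| / 2) * N + |r j₀| * trigSumConstant θ := by
  classical
  set M := |r j₀|
  have hsr_le : ∀ j, |-(s * r j)| ≤ M := fun j => by
    rw [abs_neg, abs_mul]
    exact (mul_le_of_le_one_left (abs_nonneg _) hs).trans (hj₀ j)
  have hA : ∀ j, r j * cosSum (θ j) (γ j) N ≤ M * cosSumBound (θ j) := fun j =>
    mul_le_mul_of_abs_le (hj₀ j) (abs_cosSum_le (sin_half_ne_zero_of_mem_Ioc (hθ j)) _ N)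
  have hD : ∀ j, -(s * r j) * cosSum (θ j - θ j₀) (γ j - γ j₀) N ≤
      M * cosSumBound (θ j - θ j₀) - if j = j₀ then M * N else 0 := fun j => by
    rcases eq_or_ne j j₀ with rfl | hj
    · simp only [sub_self, cosSum_zero_zero, hsr, if_pos]
      nlinarith [cosSumBound_nonneg 0, abs_nonneg (r j)]
    · rw [if_neg hj, sub_zero]
      exact mul_le_mul_of_abs_le (hsr_le j)
        (abs_cosSum_le (sin_half_sub_ne_zero (hθ j) (hθ j₀) (hinj.ne hj)) _ N)
  have hE : ∀ j, -(s * r j) * cosSum (θ j + θ j₀) (γ j + γ j₀) N ≤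
      M * cosSumBound (θ j + θ j₀) := fun j => by
    rcases eq_or_ne j j₀ with rfl | hj
    · rw [hsr, neg_mul, ← mul_neg]
      exact mul_le_mul_of_nonneg_left (neg_le.1 (neg_cosSumBound_le_cosSum_add_self (hθ j) hγ N))
        (abs_nonneg _)
    · exact mul_le_mul_of_abs_le (hsr_le j)
        (abs_cosSum_le (sin_half_add_ne_zero (hθ j) (hθ j₀) (hinj.ne hj)) _ N)
  have hpair : ∀ j, cosSumBound (θ j - θ j₀) + cosSumBound (θ j + θ j₀) ≤
      ∑ k, (cosSumBound (θ j - θ k) + cosSumBound (θ j + θ k)) := fun j =>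
    single_le_sum (f := fun k => cosSumBound (θ j - θ k) + cosSumBound (θ j + θ k))
      (fun k _ => add_nonneg (cosSumBound_nonneg _) (cosSumBound_nonneg _)) (mem_univ j₀)
  rw [sum_range_sum_mul_weight_eq]
  calc _ ≤ ∑ j, (M * (cosSumBound (θ j) + ∑ k, (cosSumBound (θ j - θ k) + cosSumBound (θ j + θ k)))
          - (if j = j₀ then M * N else 0) / 2) := sum_le_sum fun j _ => by
        have hM := abs_nonneg (r j₀)
        have hB := add_nonneg (cosSumBound_nonneg (θ j - θ j₀)) (cosSumBound_nonneg (θ j + θ j₀))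
        linarith [hA j, hD j, hE j, mul_le_mul_of_nonneg_left (hpair j) hM, mul_nonneg hM hB]
    _ = -(M / 2) * N + M * trigSumConstant θ := by
        rw [sum_sub_distrib, ← mul_sum, ← sum_div, sum_ite_eq' univ j₀, if_pos (mem_univ _),
          trigSumConstant]
        ring

lemma exists_lt_sum_le_neg_quarter (hθ : ∀ j, θ j ∈ Set.Ioc 0 π) (hinj : Function.Injective θ)
    (hγ : ∀ j, θ j = π → γ j = 0 ∨ γ j = π) {j₀ : ι} (hj₀ : ∀ j, |r j| ≤ |r j₀|) {N : ℕ}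
    (hN : 5 * trigSumConstant θ < N) :
    ∃ i < N, ∑ j, r j * cos (i * θ j + γ j) ≤ -(1 / 4) * |r j₀| := by
  have hB := cosSumBound_le_trigSumConstant θ j₀
  rcases (abs_nonneg (r j₀)).eq_or_lt with hM | hM
  · have hr : ∀ j, r j = 0 := fun j => abs_nonpos_iff.1 ((hj₀ j).trans hM.ge)
    refine ⟨0, ?_, by simp [hr]⟩
    exact_mod_cast (by linarith [cosSumBound_nonneg (θ j₀)] : (0 : ℝ) < N)
  by_contra! hf
  set M := |r j₀|
  set s := r j₀ / M
  have hs : |s| ≤ 1 := by rw [abs_div, abs_abs, div_self hM.ne']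
  have hsr : s * r j₀ = M := by
    rw [div_mul_eq_mul_div, ← sq, ← sq_abs, sq, mul_div_assoc, div_self hM.ne', mul_one]
  have hlower := neg_mul_le_sum_mul_weight (c := M / 4)
    (f := fun i : ℕ => ∑ j, r j * cos (i * θ j + γ j)) (γ j₀) (by positivity) hs
    (sin_half_ne_zero_of_mem_Ioc (hθ j₀)) fun i hi => by linarith [hf i hi]
  have hupper := sum_range_sum_mul_weight_le hθ hinj (hγ j₀) hj₀ hs hsr N
  -- together: `M N / 4 ≤ M (C + cosSumBound (θ j₀) / 4) ≤ 5 M C / 4`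
  nlinarith [mul_lt_mul_of_pos_left hN hM]

end

end

/-- Given distinct angles `θ₁,…,θ_ℓ ∈ (0,π]`, there exists `K` such that for any amplitudes
`r_j` and phases `γ_j` (with `γ_j ∈ {0,π}` whenever `θ_j = π`), some `0 ≤ i ≤ K` satisfies
`∑_j r_j cos(i θ_j + γ_j) ≤ -(1/4) max_j |r_j|`. -/
theorem stmt3 (ℓ : ℕ) (hℓ : 0 < ℓ) (θ : Fin ℓ → ℝ) (hinj : Function.Injective θ)
    (hθ : ∀ j, θ j ∈ Set.Ioc 0 Real.pi) :
    ∃ K : ℕ, ∀ r γ : Fin ℓ → ℝ,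
      (∀ j, θ j = Real.pi → γ j = 0 ∨ γ j = Real.pi) →
      ∃ i : ℕ, i ≤ K ∧
        ∑ j, r j * Real.cos (i * θ j + γ j) ≤ -(1 / 4) * (⨆ j, |r j|) := by
  have : Nonempty (Fin ℓ) := ⟨⟨0, hℓ⟩⟩
  refine ⟨⌈5 * trigSumConstant θ⌉₊, fun r γ hγ => ?_⟩
  obtain ⟨j₀, hj₀⟩ := Finite.exists_max fun j => |r j|
  have hsup : ⨆ j, |r j| = |r j₀| :=
    le_antisymm (ciSup_le hj₀) (le_ciSup (f := fun j => |r j|) (Finite.bddAbove_range _) j₀)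
  have hN : 5 * trigSumConstant θ < (⌈5 * trigSumConstant θ⌉₊ + 1 : ℕ) := by
    push_cast; linarith [Nat.le_ceil (5 * trigSumConstant θ)]
  obtain ⟨i, hi, hsum⟩ := exists_lt_sum_le_neg_quarter hθ hinj hγ hj₀ hN
  exact ⟨i, Nat.lt_succ_iff.1 hi, hsup ▸ hsum⟩
end

section
/- Let (X_n) be an auto-regressive process X_n = ∑_{j=1}^{L} a_j X_{n−j} + ξ_n with zero initial conditions X_{−L} = … = X_{−1} = 0 and i.i.d. standard Gaussian inputs ξ_n. Then there exists a constant 0 < c < 1 such that the persistence probability p_N = P(X_n ≥ 0 for all 0 ≤ n < N) satisfies p_N ≥ c^N for all N ∈ ℕ. -/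
/-!
Force the process to stay in the window `[1, 2]`. While `X_0, …, X_{N-1} ∈ [1, 2]`, the drift
`∑ a_j X_{N-j}` is bounded by `A = 2 ∑ |a_j|`, so `X_N ∈ [1, 2]` as soon as `ξ_N` falls in a
certain interval of length one inside `[-(2 + A), 2 + A]`. Since `ξ_N` is independent of the past,
this has conditional probability at least `φ(2 + A)`, the standard Gaussian density at `2 + A`;
hence `p_N ≥ φ(2 + A)^N`.
-/

open MeasureTheory ProbabilityTheory
open scoped BigOperators ENNReal NNReal

section Deterministic

variable (a : ℕ → ℝ) (L : ℕ)

/-- The guard `j ≤ n` encodes the zero initial conditions (and avoids truncated subtraction). -/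
def arDrift (y : ℕ → ℝ) (n : ℕ) : ℝ :=
  ∑ j ∈ Finset.Icc 1 L, if j ≤ n then a j * y (n - j) else 0

/-- The AR(`L`) recursion driven by `x` with zero initial conditions; the guard is spelled out
for the termination proof, `arSolution_eq` gives the intended form. -/
noncomputable def arSolution (x : ℕ → ℝ) : ℕ → ℝ
  | n => (∑ j ∈ Finset.Icc 1 L,
      if _ : 1 ≤ j ∧ j ≤ n then a j * arSolution x (n - j) else 0) + x n
  decreasing_by omega

def StaysInWindow (x : ℕ → ℝ) (N : ℕ) : Prop :=
  ∀ k < N, arSolution a L x k ∈ Set.Icc 1 2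

lemma arSolution_eq (x : ℕ → ℝ) (n : ℕ) :
    arSolution a L x n = arDrift a L (arSolution a L x) n + x n := by
  rw [arSolution, arDrift]
  congr 1
  refine Finset.sum_congr rfl fun j hj => ?_
  have hj1 := (Finset.mem_Icc.mp hj).1
  by_cases hjn : j ≤ n <;> simp [hjn, hj1]

lemma arDrift_congr {y y' : ℕ → ℝ} {n : ℕ} (h : ∀ k < n, y k = y' k) :
    arDrift a L y n = arDrift a L y' n := by
  refine Finset.sum_congr rfl fun j hj => ?_
  have hj1 := (Finset.mem_Icc.mp hj).1
  split_ifs with hjn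
  · rw [h _ (by omega)]
  · rfl

lemma arSolution_congr {x x' : ℕ → ℝ} {n : ℕ} (h : ∀ k ≤ n, x k = x' k) :
    arSolution a L x n = arSolution a L x' n := by
  induction n using Nat.strong_induction_on with
  | _ n ih =>
    rw [arSolution_eq, arSolution_eq, h n le_rfl,
      arDrift_congr a L fun k hk => ih k hk fun m hm => h m (by omega)]

lemma measurable_arDrift {n : ℕ} {f : (ℕ → ℝ) → ℕ → ℝ}
    (hf : ∀ k < n, Measurable fun x => f x k) : Measurable fun x => arDrift a L (f x) n := by
  refine Finset.measurable_sum _ fun j hj => ?_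
  have hj1 := (Finset.mem_Icc.mp hj).1
  by_cases hjn : j ≤ n
  · simpa only [hjn, if_true] using (hf (n - j) (by omega)).const_mul (a j)
  · simp only [hjn, if_false, measurable_const]

lemma measurable_arSolution (n : ℕ) : Measurable fun x : ℕ → ℝ => arSolution a L x n := by
  induction n using Nat.strong_induction_on with
  | _ n ih =>
    simp only [arSolution_eq a L _ n]
    exact (measurable_arDrift a L ih).add (measurable_pi_apply n)

lemma measurableSet_staysInWindow (N : ℕ) : MeasurableSet {x | StaysInWindow a L x N} := by
  simp only [StaysInWindow, Set.ofPred_forall]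
  exact .iInter fun k => .iInter fun _ => measurable_arSolution a L k measurableSet_Icc

lemma abs_arDrift_le {y : ℕ → ℝ} {n : ℕ} {M : ℝ} (hM : 0 ≤ M) (hy : ∀ k < n, |y k| ≤ M) :
    |arDrift a L y n| ≤ M * ∑ j ∈ Finset.Icc 1 L, |a j| := by
  rw [Finset.mul_sum]
  refine (Finset.abs_sum_le_sum_abs _ _).trans (Finset.sum_le_sum fun j hj => ?_)
  have hj1 := (Finset.mem_Icc.mp hj).1
  split_ifs with hjn
  · rw [abs_mul, mul_comm]
    exact mul_le_mul_of_nonneg_right (hy _ (by omega)) (abs_nonneg _)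
  · rw [abs_zero]
    positivity

lemma eq_arSolution (x : ℕ → ℝ) (X : ℤ → ℝ) (hinit : ∀ n : ℤ, n < 0 → X n = 0)
    (hrec : ∀ n : ℕ, X n = ∑ j ∈ Finset.Icc 1 L, a j * X ((n : ℤ) - (j : ℤ)) + x n) (n : ℕ) :
    X n = arSolution a L x n := by
  induction n using Nat.strong_induction_on with
  | _ n ih =>
    rw [hrec, arSolution_eq, arDrift]
    congr 1
    refine Finset.sum_congr rfl fun j hj => ?_
    have hj1 := (Finset.mem_Icc.mp hj).1
    split_ifs with hjn
    · rw [← ih (n - j) (by omega), Nat.cast_sub hjn]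
    · rw [hinit _ (by omega), mul_zero]

end Deterministic

namespace ProbabilityTheory

lemma ofReal_gaussianPDFReal_mul_volume_le (m : ℝ) {v : ℝ≥0} (hv : v ≠ 0) {R : ℝ} {s : Set ℝ}
    (hs : s ⊆ Set.Icc (m - R) (m + R)) :
    ENNReal.ofReal (gaussianPDFReal m v (m + R)) * volume s ≤ gaussianReal m v s := by
  rw [gaussianReal_apply m hv, ← setLIntegral_const]
  refine setLIntegral_mono (measurable_gaussianPDF m v) fun x hx => ENNReal.ofReal_le_ofReal ?_
  obtain ⟨hlo, hhi⟩ := hs hx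
  have hsq : (x - m) ^ 2 ≤ (m + R - m) ^ 2 := by nlinarith
  simp only [gaussianPDFReal]
  gcongr

lemma ofReal_gaussianPDFReal_le_gaussianReal_Icc {A d : ℝ} (hd : |d| ≤ A) :
    ENNReal.ofReal (gaussianPDFReal 0 1 (2 + A)) ≤ gaussianReal 0 1 (Set.Icc (1 - d) (2 - d)) := by
  calc ENNReal.ofReal (gaussianPDFReal 0 1 (2 + A))
      = ENNReal.ofReal (gaussianPDFReal 0 1 (0 + (2 + A))) * volume (Set.Icc (1 - d) (2 - d)) := by
        rw [Real.volume_Icc, zero_add]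
        norm_num
    _ ≤ gaussianReal 0 1 (Set.Icc (1 - d) (2 - d)) := by
        refine ofReal_gaussianPDFReal_mul_volume_le 0 one_ne_zero fun z hz => ?_
        rw [abs_le] at hd
        constructor <;> linarith [hz.1, hz.2]

lemma IndepFun.mul_measure_le_measure_preimage_prod {Ω β γ : Type*} {mΩ : MeasurableSpace Ω}
    [MeasurableSpace β] [MeasurableSpace γ] {μ : Measure Ω} [IsFiniteMeasure μ]
    {Y : Ω → β} {Z : Ω → γ} (hYZ : IndepFun Y Z μ) (hY : Measurable Y) (hZ : Measurable Z)
    {B : Set β} (hB : MeasurableSet B) {D : Set (β × γ)} (hD : MeasurableSet D) {c : ℝ≥0∞}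
    (hc : ∀ y ∈ B, c ≤ μ.map Z (Prod.mk y ⁻¹' D)) :
    c * μ (Y ⁻¹' B) ≤ μ ((fun ω => (Y ω, Z ω)) ⁻¹' D) := by
  calc c * μ (Y ⁻¹' B) = ∫⁻ _ in B, c ∂μ.map Y := by
        rw [setLIntegral_const, Measure.map_apply hY hB]
    _ ≤ ∫⁻ y in B, μ.map Z (Prod.mk y ⁻¹' D) ∂μ.map Y := setLIntegral_mono' hB hc
    _ ≤ ∫⁻ y, μ.map Z (Prod.mk y ⁻¹' D) ∂μ.map Y := setLIntegral_le_lintegral _ _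
    _ = ((μ.map Y).prod (μ.map Z)) D := (Measure.prod_apply hD).symm
    _ = μ ((fun ω => (Y ω, Z ω)) ⁻¹' D) := by
        rw [← (indepFun_iff_map_prod_eq_prod_map_map hY.aemeasurable hZ.aemeasurable).mp hYZ,
          Measure.map_apply (hY.prodMk hZ) hD]

lemma iIndepFun.indepFun_truncate {Ω β : Type*} {mΩ : MeasurableSpace Ω} [MeasurableSpace β]
    [Zero β] {μ : Measure Ω} {ξ : ℕ → Ω → β} (hξ : iIndepFun ξ μ) (hmeas : ∀ n, Measurable (ξ n))
    (N : ℕ) : IndepFun (fun ω k => if k < N then ξ k ω else 0) (ξ N) μ := by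
  have h := hξ.indepFun_finset (Finset.range N) {N} (by simp) hmeas
  exact h.comp (φ := fun y k => if h : k < N then y ⟨k, Finset.mem_range.2 h⟩ else 0)
    (ψ := fun y => y ⟨N, Finset.mem_singleton_self N⟩)
    (measurable_pi_lambda _ fun k => by split_ifs <;> fun_prop)
    (measurable_pi_apply (X := fun _ => β) _)

end ProbabilityTheory

section Persistence

variable {Ω : Type*} {mΩ : MeasurableSpace Ω} {μ : Measure Ω} [IsProbabilityMeasure μ]
  (a : ℕ → ℝ) (L : ℕ) {ξ : ℕ → Ω → ℝ}

lemma ofReal_gaussianPDFReal_mul_measure_staysInWindow_le (hmeas : ∀ n, Measurable (ξ n))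
    (hgauss : ∀ n, μ.map (ξ n) = gaussianReal 0 1) (hindep : iIndepFun ξ μ) (N : ℕ) :
    ENNReal.ofReal (gaussianPDFReal 0 1 (2 + 2 * ∑ j ∈ Finset.Icc 1 L, |a j|))
        * μ {ω | StaysInWindow a L (fun i => ξ i ω) N}
      ≤ μ {ω | StaysInWindow a L (fun i => ξ i ω) (N + 1)} := by
  -- `Y` forgets `ξ_N, ξ_{N+1}, …`: it is independent of `ξ_N`, yet determines the past and the drift.
  set Y : Ω → ℕ → ℝ := fun ω k => if k < N then ξ k ω else 0
  have hY : Measurable Y := measurable_pi_lambda _ fun k => by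
    by_cases hk : k < N <;> simp only [Y, hk, if_true, if_false, hmeas, measurable_const]
  have hpast (ω : Ω) {k : ℕ} (hk : k < N) :
      arSolution a L (fun i => ξ i ω) k = arSolution a L (Y ω) k :=
    arSolution_congr a L fun i hi => by simp only [Y, show i < N by omega, if_true]
  set B := {y | StaysInWindow a L y N}
  set D : Set ((ℕ → ℝ) × ℝ) :=
    {p | p.1 ∈ B ∧ arDrift a L (arSolution a L p.1) N + p.2 ∈ Set.Icc 1 2}
  have hD : MeasurableSet D :=
    (measurable_fst (measurableSet_staysInWindow a L N)).inter <| measurableSet_preimage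
      (((measurable_arDrift a L fun k _ => measurable_arSolution a L k).comp measurable_fst).add
        measurable_snd) measurableSet_Icc
  have hnow : {ω | StaysInWindow a L (fun i => ξ i ω) N} = Y ⁻¹' B := by
    ext ω
    exact forall₂_congr fun k hk => by rw [hpast ω hk]
  have hnext : {ω | StaysInWindow a L (fun i => ξ i ω) (N + 1)}
      = (fun ω => (Y ω, ξ N ω)) ⁻¹' D := by
    ext ω
    change (∀ k < N + 1, _) ↔ ω ∈ Y ⁻¹' B ∧ _
    rw [Nat.forall_lt_succ_right, ← hnow, arSolution_eq a L _ N,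
      arDrift_congr a L fun k hk => hpast ω hk]
    rfl
  rw [hnow, hnext]
  refine (hindep.indepFun_truncate hmeas N).mul_measure_le_measure_preimage_prod hY (hmeas N)
    (measurableSet_staysInWindow a L N) hD fun y hy => ?_
  set d := arDrift a L (arSolution a L y) N
  have hslice : Prod.mk y ⁻¹' D = Set.Icc (1 - d) (2 - d) := by
    ext z
    change y ∈ B ∧ d + z ∈ Set.Icc 1 2 ↔ z ∈ Set.Icc (1 - d) (2 - d)
    rw [and_iff_right hy, Set.mem_Icc, Set.mem_Icc]
    constructor <;> rintro ⟨h₁, h₂⟩ <;> constructor <;> linarith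
  rw [hgauss N, hslice]
  exact ofReal_gaussianPDFReal_le_gaussianReal_Icc <| abs_arDrift_le a L zero_le_two
    fun k hk => abs_le.2 ⟨by linarith [(hy k hk).1], (hy k hk).2⟩

lemma ofReal_gaussianPDFReal_pow_le_measure_staysInWindow (hmeas : ∀ n, Measurable (ξ n))
    (hgauss : ∀ n, μ.map (ξ n) = gaussianReal 0 1) (hindep : iIndepFun ξ μ) (N : ℕ) :
    ENNReal.ofReal (gaussianPDFReal 0 1 (2 + 2 * ∑ j ∈ Finset.Icc 1 L, |a j|)) ^ N
      ≤ μ {ω | StaysInWindow a L (fun i => ξ i ω) N} := by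
  induction N with
  | zero => simp [StaysInWindow]
  | succ N ih =>
    rw [pow_succ']
    exact (mul_le_mul_right ih _).trans
      (ofReal_gaussianPDFReal_mul_measure_staysInWindow_le a L hmeas hgauss hindep N)

end Persistence

theorem stmt5_general {Ω : Type*} [MeasureSpace Ω] [IsProbabilityMeasure (ℙ : Measure Ω)]
    (L : ℕ) (a : ℕ → ℝ)
    (ξ : ℕ → Ω → ℝ) (hmeas : ∀ n, Measurable (ξ n))
    (hgauss : ∀ n, Measure.map (ξ n) ℙ = gaussianReal 0 1)
    (hindep : iIndepFun ξ ℙ)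
    (X : ℤ → Ω → ℝ)
    (hinit : ∀ n : ℤ, n < 0 → X n = 0)
    (hrec : ∀ (n : ℕ) (ω : Ω),
      X n ω = ∑ j ∈ Finset.Icc 1 L, a j * X ((n : ℤ) - (j : ℤ)) ω + ξ n ω) :
    ∃ c : ℝ, 0 < c ∧ c < 1 ∧ ∀ N : ℕ,
      c ^ N ≤ (ℙ {ω | ∀ n : ℕ, n < N → 0 ≤ X n ω}).toReal := by
  set d := gaussianPDFReal 0 1 (2 + 2 * ∑ j ∈ Finset.Icc 1 L, |a j|)
  have hd : 0 < d := gaussianPDFReal_pos _ _ _ one_ne_zero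
  have hc : 0 < min d (1 / 2) := lt_min hd one_half_pos
  refine ⟨min d (1 / 2), hc, (min_le_right _ _).trans_lt one_half_lt_one, fun N => ?_⟩
  have hsub : {ω | StaysInWindow a L (fun i => ξ i ω) N} ⊆ {ω | ∀ n : ℕ, n < N → 0 ≤ X n ω} :=
    fun ω hω n hn => by
      rw [eq_arSolution a L _ (X · ω) (fun m hm => by rw [hinit m hm]; rfl) (hrec · ω) n]
      exact zero_le_one.trans (hω n hn).1
  rw [← ENNReal.ofReal_le_iff_le_toReal (measure_ne_top _ _), ENNReal.ofReal_pow hc.le]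
  calc ENNReal.ofReal (min d (1 / 2)) ^ N ≤ ENNReal.ofReal d ^ N := by
        gcongr
        exact min_le_left _ _
    _ ≤ ℙ {ω | StaysInWindow a L (fun i => ξ i ω) N} :=
        ofReal_gaussianPDFReal_pow_le_measure_staysInWindow a L hmeas hgauss hindep N
    _ ≤ _ := measure_mono hsub

/-- For a Gaussian AR(L) process with zero initial conditions, the persistence
probability satisfies `p_N ≥ c^N` for some `0 < c < 1`. -/
theorem stmt5 {Ω : Type*} [MeasureSpace Ω] [IsProbabilityMeasure (ℙ : Measure Ω)]
    (L : ℕ) (hL : 0 < L) (a : ℕ → ℝ)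
    (ξ : ℕ → Ω → ℝ) (hmeas : ∀ n, Measurable (ξ n))
    (hgauss : ∀ n, Measure.map (ξ n) ℙ = gaussianReal 0 1)
    (hindep : iIndepFun ξ ℙ)
    (X : ℤ → Ω → ℝ)
    (hinit : ∀ n : ℤ, n < 0 → X n = 0)
    (hrec : ∀ (n : ℕ) (ω : Ω),
      X n ω = ∑ j ∈ Finset.Icc 1 L, a j * X ((n : ℤ) - (j : ℤ)) ω + ξ n ω) :
    ∃ c : ℝ, 0 < c ∧ c < 1 ∧ ∀ N : ℕ,
      c ^ N ≤ (ℙ {ω | ∀ n : ℕ, n < N → 0 ≤ X n ω}).toReal :=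
  stmt5_general L a ξ hmeas hgauss hindep X hinit hrec
end

section
/- Let (S_n^{(m)}) be an integrated random walk of order m driven by i.i.d. standard Gaussians (i.e. the AR process generated by (z−1)^m), and let (f_n) be any deterministic real sequence. Then for every ε > 0 there is c_ε > 0 with c_ε → 0 as ε → 0 such that for all N, P(S_n^{(m)} ≥ f_n + ε n^{m−1/2} for all 1 ≤ n ≤ N) ≥ P(S_n^{(m)} ≥ f_n for all 1 ≤ n ≤ N)^{1+c_ε} · N^{−c_ε}. -/
/-!
Write `S_n^{(m)} = ∑_{k ≤ n} w_{n,k} ξ_k` with weights `w_{n,k} ≥ 0` of total mass at least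
`n^m / m!`. Then shifting the increments by `δ_k = m! ε / √k` raises every `S_n^{(m)}`,
`n ≤ N`, by at least `ε n^{m-1/2}`. For a standard Gaussian vector, the Cameron–Martin density
of a shift `δ` and Hölder's inequality with exponents `1 + c` and `(1 + c) / c` give
`P(B)^{1+c} ≤ P(B + δ) exp((1 + c) |δ|² / (2c))`, and here `|δ|² ≤ (m! ε)² (1 + log N)`.
With `c = m! ε + (m! ε)²` the exponential factor is at most `e^c N^c`. The constant `e^c` is then
absorbed into `P(B)^{c/L}`: `B ⊆ {ξ_1 ≥ f_1}`, an event of probability `e^{-L} < 1`.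
-/

open MeasureTheory ProbabilityTheory Filter Finset Real
open scoped ENNReal NNReal Nat

noncomputable def partialSums : Module.End ℝ (ℕ → ℝ) where
  toFun x n := ∑ k ∈ Icc 1 n, x k
  map_add' x y := by ext n; simp [sum_add_distrib]
  map_smul' r x := by ext n; simp [mul_sum]

@[simp]
lemma partialSums_apply (x : ℕ → ℝ) (n : ℕ) : partialSums x n = ∑ k ∈ Icc 1 n, x k := rfl

lemma pow_succ_partialSums_apply (M : ℕ) (x : ℕ → ℝ) (n : ℕ) :
    (partialSums ^ (M + 1)) x n = ∑ k ∈ Icc 1 n, (partialSums ^ M) x k := by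
  rw [pow_succ', Module.End.mul_apply, partialSums_apply]

lemma pow_partialSums_mono (M : ℕ) {x y : ℕ → ℝ} {n : ℕ} (hn : 1 ≤ n)
    (h : ∀ k ∈ Icc 1 n, x k ≤ y k) : (partialSums ^ M) x n ≤ (partialSums ^ M) y n := by
  induction M generalizing n with
  | zero => exact h n (mem_Icc.2 ⟨hn, le_rfl⟩)
  | succ M ih =>
    simp only [pow_succ_partialSums_apply]
    refine sum_le_sum fun k hk => ih (mem_Icc.1 hk).1 fun j hj => h j ?_
    simp only [mem_Icc] at hj hk ⊢
    omega

lemma pow_partialSums_congr (M : ℕ) {x y : ℕ → ℝ} {n : ℕ} (hn : 1 ≤ n)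
    (h : ∀ k ∈ Icc 1 n, x k = y k) : (partialSums ^ M) x n = (partialSums ^ M) y n :=
  (pow_partialSums_mono M hn fun k hk => (h k hk).le).antisymm
    (pow_partialSums_mono M hn fun k hk => (h k hk).ge)

lemma pow_partialSums_apply_one (M : ℕ) (x : ℕ → ℝ) : (partialSums ^ M) x 1 = x 1 := by
  induction M with
  | zero => rfl
  | succ M ih => rw [pow_succ_partialSums_apply, Icc_self, sum_singleton, ih]

lemma pow_succ_div_le_sum_Icc_pow (M n : ℕ) :
    (n : ℝ) ^ (M + 1) / (M + 1) ≤ ∑ k ∈ Icc 1 n, (k : ℝ) ^ M := by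
  have hmono : MonotoneOn (fun x : ℝ => x ^ M) (Set.Icc (0 : ℕ) n) :=
    fun x hx y _ hxy => pow_le_pow_left₀ (by simpa using hx.1) hxy M
  have := hmono.integral_le_sum_Ico (Nat.zero_le n)
  rw [← Ico_add_one_right_eq_Icc, sum_Ico_eq_sum_range]
  simpa [integral_pow, add_comm] using this

lemma pow_div_factorial_le_pow_partialSums_one (M n : ℕ) :
    (n : ℝ) ^ M / M ! ≤ (partialSums ^ M) 1 n := by
  induction M generalizing n with
  | zero => simp
  | succ M ih =>
    calc (n : ℝ) ^ (M + 1) / (M + 1)! = (n : ℝ) ^ (M + 1) / (M + 1) / M ! := by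
          push_cast [Nat.factorial_succ]; rw [div_div]
      _ ≤ (∑ k ∈ Icc 1 n, (k : ℝ) ^ M) / M ! := by
          gcongr; exact pow_succ_div_le_sum_Icc_pow M n
      _ ≤ (partialSums ^ (M + 1)) 1 n := by
          rw [pow_succ_partialSums_apply, sum_div]
          exact sum_le_sum fun k _ => ih k

lemma mul_pow_div_factorial_le_pow_partialSums (M : ℕ) {x : ℕ → ℝ} {n : ℕ} (hn : 1 ≤ n)
    {b : ℝ} (hb : 0 ≤ b) (h : ∀ k ∈ Icc 1 n, b ≤ x k) :
    b * ((n : ℝ) ^ M / M !) ≤ (partialSums ^ M) x n :=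
  calc b * ((n : ℝ) ^ M / M !) ≤ b * (partialSums ^ M) 1 n :=
        mul_le_mul_of_nonneg_left (pow_div_factorial_le_pow_partialSums_one M n) hb
    _ = (partialSums ^ M) (b • 1) n := by rw [map_smul]; rfl
    _ ≤ (partialSums ^ M) x n := pow_partialSums_mono M hn fun k hk => by simpa using h k hk

lemma eq_pow_partialSums_of_rec {x : ℕ → ℝ} {S : ℕ → ℕ → ℝ}
    (h1 : ∀ n, S 1 n = ∑ k ∈ Icc 1 n, x k)
    (hrec : ∀ M n, S (M + 2) n = ∑ k ∈ Icc 1 n, S (M + 1) k) (M : ℕ) :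
    S (M + 1) = (partialSums ^ (M + 1)) x := by
  induction M with
  | zero => ext n; simp [h1]
  | succ M ih => ext n; rw [hrec, pow_succ_partialSums_apply, ih]

lemma measure_rpow_one_add_le_withDensity_mul {α : Type*} [MeasurableSpace α] (μ : Measure α)
    {h : α → ℝ} (hh : Measurable h) {c : ℝ} (hc : 0 < c) {B : Set α} (hB : MeasurableSet B) :
    μ B ^ (1 + c) ≤ μ.withDensity (fun x => ENNReal.ofReal (exp (h x))) B *
      (∫⁻ x, ENNReal.ofReal (exp (-h x / c)) ∂μ) ^ c := by
  set p := 1 + c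
  have hp : 0 < p := by positivity
  have hpq : p.HolderConjugate (p / c) :=
    (Real.holderConjugate_iff_eq_conjExponent (by linarith)).2 (by simp [p])
  set F : α → ℝ≥0∞ := B.indicator fun x => ENNReal.ofReal (exp (h x / p))
  set G : α → ℝ≥0∞ := fun x => ENNReal.ofReal (exp (-h x / p))
  have hFG : ∫⁻ x, (F * G) x ∂μ = μ B := by
    rw [← lintegral_indicator_one hB]
    refine lintegral_congr fun x => ?_
    by_cases hx : x ∈ B
    · simp [F, G, hx, ← ENNReal.ofReal_mul (exp_nonneg _), ← exp_add, neg_div]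
    · simp [F, hx]
  have hF : ∫⁻ x, F x ^ p ∂μ = μ.withDensity (fun x => ENNReal.ofReal (exp (h x))) B := by
    rw [withDensity_apply _ hB, ← lintegral_indicator hB]
    refine lintegral_congr fun x => ?_
    by_cases hx : x ∈ B
    · simp [F, hx, ENNReal.ofReal_rpow_of_pos (exp_pos _), ← exp_mul, div_mul_cancel₀ _ hp.ne']
    · simp [F, hx, hp]
  have hG : ∫⁻ x, G x ^ (p / c) ∂μ = ∫⁻ x, ENNReal.ofReal (exp (-h x / c)) ∂μ := by
    refine lintegral_congr fun x => ?_
    simp only [G, ENNReal.ofReal_rpow_of_pos (exp_pos _), ← exp_mul]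
    congr 2
    field_simp
  have holder := ENNReal.lintegral_mul_le_Lp_mul_Lq μ hpq
    ((by fun_prop : Measurable fun x => ENNReal.ofReal (exp (h x / p))).indicator hB).aemeasurable
    (by fun_prop : Measurable G).aemeasurable
  rw [hFG, hF, hG] at holder
  calc μ B ^ p ≤ (_ ^ (1 / p) * _ ^ (1 / (p / c))) ^ p := ENNReal.rpow_le_rpow holder hp.le
    _ = _ := by
      rw [ENNReal.mul_rpow_of_nonneg _ _ hp.le, ← ENNReal.rpow_mul, ← ENNReal.rpow_mul,
        one_div_mul_cancel hp.ne', ENNReal.rpow_one]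
      field_simp

lemma gaussianReal_withDensity_exp (a : ℝ) :
    (gaussianReal 0 1).withDensity (fun x => ENNReal.ofReal (exp (a * x - a ^ 2 / 2))) =
      gaussianReal a 1 := by
  rw [gaussianReal_of_var_ne_zero 0 one_ne_zero, gaussianReal_of_var_ne_zero a one_ne_zero,
    ← withDensity_mul _ (measurable_gaussianPDF 0 1) (by fun_prop)]
  congr 1
  ext x
  rw [Pi.mul_apply, gaussianPDF, gaussianPDF, ← ENNReal.ofReal_mul (gaussianPDFReal_nonneg 0 1 x)]
  simp only [gaussianPDFReal, mul_assoc, ← exp_add]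
  congr 3
  push_cast
  ring

lemma lintegral_exp_mul_gaussianReal (a : ℝ) :
    ∫⁻ x, ENNReal.ofReal (exp (a * x)) ∂gaussianReal 0 1 = ENNReal.ofReal (exp (a ^ 2 / 2)) := by
  have h := congrArg (· Set.univ) (gaussianReal_withDensity_exp a)
  simp only [withDensity_apply _ MeasurableSet.univ, Measure.restrict_univ, measure_univ] at h
  have hsplit : ∀ x, ENNReal.ofReal (exp (a * x)) =
      ENNReal.ofReal (exp (a ^ 2 / 2)) * ENNReal.ofReal (exp (a * x - a ^ 2 / 2)) := fun x => by
    rw [← ENNReal.ofReal_mul (exp_nonneg _), ← exp_add]; ring_nf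
  simp_rw [hsplit]
  rw [lintegral_const_mul _ (by fun_prop), h, mul_one]

lemma lintegral_pi_prod {ι : Type*} [Fintype ι] {X : ι → Type*} [∀ i, MeasurableSpace (X i)]
    (μ : ∀ i, Measure (X i)) [∀ i, IsProbabilityMeasure (μ i)] {g : ∀ i, X i → ℝ≥0∞}
    (hg : ∀ i, Measurable (g i)) :
    ∫⁻ x, ∏ i, g i (x i) ∂Measure.pi μ = ∏ i, ∫⁻ y, g i y ∂μ i := by
  rw [lintegral_prod_eq_prod_lintegral_of_indepFun _ _
    (iIndepFun_pi fun i => (hg i).aemeasurable) fun i => (hg i).comp (measurable_pi_apply i)]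
  exact prod_congr rfl fun i _ => (measurePreserving_eval μ i).lintegral_comp (hg i)

lemma indicator_univ_pi_prod {ι : Type*} [Fintype ι] {X : ι → Type*} (s : ∀ i, Set (X i))
    (g : ∀ i, X i → ℝ≥0∞) (x : ∀ i, X i) :
    (Set.univ.pi s).indicator (fun x => ∏ i, g i (x i)) x = ∏ i, (s i).indicator (g i) (x i) := by
  by_cases hx : x ∈ Set.univ.pi s
  · rw [Set.indicator_of_mem hx]
    exact prod_congr rfl fun i _ => (Set.indicator_of_mem (hx i (Set.mem_univ i)) _).symm
  · obtain ⟨i, hi⟩ := by simpa [Set.mem_pi] using hx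
    rw [Set.indicator_of_notMem hx, prod_eq_zero (mem_univ i) (Set.indicator_of_notMem hi _)]

lemma MeasureTheory.Measure.pi_withDensity {ι : Type*} [Fintype ι] {X : ι → Type*}
    [∀ i, MeasurableSpace (X i)] (μ : ∀ i, Measure (X i)) [∀ i, IsProbabilityMeasure (μ i)]
    {ρ : ∀ i, X i → ℝ≥0∞} (hρ : ∀ i, Measurable (ρ i))
    [∀ i, SigmaFinite ((μ i).withDensity (ρ i))] :
    Measure.pi (fun i => (μ i).withDensity (ρ i)) =
      (Measure.pi μ).withDensity (fun x => ∏ i, ρ i (x i)) := by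
  refine Measure.pi_eq fun s hs => ?_
  rw [withDensity_apply _ (.univ_pi hs), ← lintegral_indicator (.univ_pi hs)]
  simp_rw [indicator_univ_pi_prod]
  rw [lintegral_pi_prod μ fun i => (hρ i).indicator (hs i)]
  exact prod_congr rfl fun i _ => by rw [withDensity_apply _ (hs i), lintegral_indicator (hs i)]

lemma map_sub_pi_gaussianReal {ι : Type*} [Fintype ι] (δ : ι → ℝ) :
    (Measure.pi fun _ : ι => gaussianReal 0 1).map (fun x => x - δ) =
      (Measure.pi fun _ : ι => gaussianReal 0 1).withDensity
        (fun x => ENNReal.ofReal (exp (∑ i, (-δ i * x i - δ i ^ 2 / 2)))) := by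
  have hdens : ∀ i, (gaussianReal 0 1).withDensity
      (fun y => ENNReal.ofReal (exp (-δ i * y - δ i ^ 2 / 2))) = gaussianReal (-δ i) 1 := by
    simpa only [neg_sq] using fun i => gaussianReal_withDensity_exp (-δ i)
  have : ∀ i, SigmaFinite ((gaussianReal 0 1).withDensity
      (fun y => ENNReal.ofReal (exp (-δ i * y - δ i ^ 2 / 2)))) := fun i => by
    rw [hdens]; infer_instance
  have hshift : ∀ i, (gaussianReal 0 1).map (fun y => y - δ i) = gaussianReal (-δ i) 1 :=
    fun i => by simpa [sub_eq_add_neg] using gaussianReal_map_add_const (μ := 0) (v := 1) (-δ i)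
  simp_rw [exp_sum, ENNReal.ofReal_prod_of_nonneg fun i _ => exp_nonneg _]
  rw [← Measure.pi_withDensity (fun _ : ι => gaussianReal 0 1)
      (ρ := fun i y => ENNReal.ofReal (exp (-δ i * y - δ i ^ 2 / 2))) fun i => by fun_prop,
    funext hdens, ← funext hshift]
  exact Measure.pi_map_pi fun i => (measurable_sub_const _).aemeasurable

lemma lintegral_exp_sum_mul_pi_gaussianReal {ι : Type*} [Fintype ι] (a : ι → ℝ) :
    ∫⁻ x, ENNReal.ofReal (exp (∑ i, a i * x i)) ∂Measure.pi (fun _ : ι => gaussianReal 0 1) =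
      ENNReal.ofReal (exp (∑ i, a i ^ 2 / 2)) := by
  simp_rw [exp_sum, ENNReal.ofReal_prod_of_nonneg fun i _ => exp_nonneg _]
  rw [lintegral_pi_prod (fun _ : ι => gaussianReal 0 1)
    (g := fun i y => ENNReal.ofReal (exp (a i * y))) fun i => by fun_prop]
  simp_rw [lintegral_exp_mul_gaussianReal]

lemma pi_gaussianReal_rpow_one_add_le {ι : Type*} [Fintype ι] (δ : ι → ℝ) {c : ℝ} (hc : 0 < c)
    {B : Set (ι → ℝ)} (hB : MeasurableSet B) :
    Measure.pi (fun _ : ι => gaussianReal 0 1) B ^ (1 + c) ≤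
      Measure.pi (fun _ : ι => gaussianReal 0 1) ((fun x => x - δ) ⁻¹' B) *
        ENNReal.ofReal (exp ((1 + c) / (2 * c) * ∑ i, δ i ^ 2)) := by
  have key := measure_rpow_one_add_le_withDensity_mul (Measure.pi fun _ : ι => gaussianReal 0 1)
    (h := fun x => ∑ i, (-δ i * x i - δ i ^ 2 / 2)) (by fun_prop) hc hB
  rw [← map_sub_pi_gaussianReal, Measure.map_apply (by fun_prop) hB] at key
  refine key.trans_eq (congrArg _ ?_)
  have hexp : ∀ x : ι → ℝ, -(∑ i, (-δ i * x i - δ i ^ 2 / 2)) / c =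
      ∑ i, δ i / c * x i + (∑ i, δ i ^ 2) / (2 * c) := fun x => by
    simp only [← sum_neg_distrib, sum_div, ← sum_add_distrib]
    exact sum_congr rfl fun i _ => by field_simp; ring
  simp_rw [hexp, exp_add, ENNReal.ofReal_mul (exp_nonneg _)]
  rw [lintegral_mul_const _ (by fun_prop), lintegral_exp_sum_mul_pi_gaussianReal,
    ← ENNReal.ofReal_mul (exp_nonneg _), ← exp_add, ENNReal.ofReal_rpow_of_pos (exp_pos _),
    ← exp_mul]
  congr 2
  simp only [div_pow, ← sum_div]
  field_simp

lemma gaussianReal_real_pos (μ : ℝ) {v : ℝ≥0} (hv : v ≠ 0) {s : Set ℝ} (hs : volume s ≠ 0) :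
    0 < (gaussianReal μ v).real s :=
  ENNReal.toReal_pos (fun h => hs (gaussianReal_absolutelyContinuous' μ hv h)) (measure_ne_top _ _)

lemma gaussianReal_real_Ici_lt_one (μ : ℝ) {v : ℝ≥0} (hv : v ≠ 0) (t : ℝ) :
    (gaussianReal μ v).real (Set.Ici t) < 1 := by
  rw [← Set.compl_Iio, probReal_compl_eq_one_sub measurableSet_Iio, sub_lt_self_iff]
  exact gaussianReal_real_pos μ hv (by simp)

lemma map_eq_pi_of_iIndepFun {Ω ι β : Type*} [MeasurableSpace Ω] [MeasurableSpace β]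
    {μ : Measure Ω} [IsProbabilityMeasure μ] {ξ : ι → Ω → β} (hmeas : ∀ i, Measurable (ξ i))
    {ν : Measure β}
    (hlaw : ∀ i, μ.map (ξ i) = ν) (hindep : iIndepFun ξ μ) (s : Finset ι) :
    μ.map (fun ω (i : s) => ξ i ω) = Measure.pi fun _ => ν := by
  rw [(hindep.precomp Subtype.val_injective).map_fun_eq_pi_map
    fun i : s => (hmeas i).aemeasurable]
  simp only [hlaw]

noncomputable def walkFunctional (m N n : ℕ) : (Icc 1 N → ℝ) →ₗ[ℝ] ℝ :=
  LinearMap.proj n ∘ₗ (partialSums ^ m) ∘ₗ Function.ExtendByZero.linearMap ℝ Subtype.val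

lemma walkFunctional_apply_of_eq {m N n : ℕ} (hn : n ∈ Icc 1 N) {x : Icc 1 N → ℝ}
    {y : ℕ → ℝ} (hxy : ∀ i, x i = y i) : walkFunctional m N n x = (partialSums ^ m) y n := by
  refine pow_partialSums_congr m (mem_Icc.1 hn).1 fun k hk => ?_
  have hkN : k ∈ Icc 1 N := by simp only [mem_Icc] at hk hn ⊢; omega
  exact (Subtype.val_injective.extend_apply x 0 ⟨k, hkN⟩).trans (hxy _)

lemma mul_rpow_le_walkFunctional {m N n : ℕ} (hn : n ∈ Icc 1 N) {ε : ℝ} (hε : 0 ≤ ε) :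
    ε * (n : ℝ) ^ ((m : ℝ) - 1 / 2) ≤
      walkFunctional m N n fun i => m ! * ε / √(i : ℕ) := by
  have hn1 : 1 ≤ n := (mem_Icc.1 hn).1
  have hn0 : (0 : ℝ) < n := by exact_mod_cast hn1
  rw [walkFunctional_apply_of_eq hn (y := fun k => m ! * ε / √k) fun i => rfl]
  calc ε * (n : ℝ) ^ ((m : ℝ) - 1 / 2) = m ! * ε / √n * ((n : ℝ) ^ m / m !) := by
        rw [rpow_sub hn0, rpow_natCast, sqrt_eq_rpow]
        field_simp
    _ ≤ _ := mul_pow_div_factorial_le_pow_partialSums m hn1 (by positivity) fun k hk => by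
        have hk1 : (1 : ℝ) ≤ k := by exact_mod_cast (mem_Icc.1 hk).1
        gcongr
        exact_mod_cast (mem_Icc.1 hk).2

def walkEvent (m N : ℕ) (g : ℕ → ℝ) : Set (Icc 1 N → ℝ) :=
  {x | ∀ n, 1 ≤ n → n ≤ N → g n ≤ walkFunctional m N n x}

lemma measurableSet_walkEvent (m N : ℕ) (g : ℕ → ℝ) : MeasurableSet (walkEvent m N g) := by
  simp only [walkEvent, Set.ofPred_forall]
  exact .iInter fun n => .iInter fun _ => .iInter fun _ =>
    measurableSet_le measurable_const (LinearMap.continuous_of_finiteDimensional _).measurable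

lemma sub_preimage_walkEvent_subset (m N : ℕ) (f : ℕ → ℝ) {ε : ℝ} (hε : 0 ≤ ε) :
    (fun x => x - fun i : Icc 1 N => m ! * ε / √(i : ℕ)) ⁻¹' walkEvent m N f ⊆
      walkEvent m N fun n => f n + ε * (n : ℝ) ^ ((m : ℝ) - 1 / 2) := by
  intro x hx n hn1 hnN
  have hn : n ∈ Icc 1 N := mem_Icc.2 ⟨hn1, hnN⟩
  have := hx n hn1 hnN
  rw [map_sub] at this
  linarith [mul_rpow_le_walkFunctional (m := m) hn hε]

lemma sum_Icc_div_sqrt_sq_le_mul_one_add_log (N : ℕ) (a : ℝ) :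
    ∑ i : Icc 1 N, (a / √(i : ℕ)) ^ 2 ≤ a ^ 2 * (1 + log N) := by
  calc ∑ i : Icc 1 N, (a / √(i : ℕ)) ^ 2 = a ^ 2 * ∑ i ∈ Icc 1 N, ((i : ℕ) : ℝ)⁻¹ := by
        rw [sum_coe_sort (Icc 1 N) fun i => (a / √(i : ℕ)) ^ 2, mul_sum]
        refine sum_congr rfl fun i _ => ?_
        rw [div_pow, sq_sqrt (Nat.cast_nonneg _), div_eq_mul_inv]
    _ ≤ a ^ 2 * (1 + log N) := by
        gcongr
        simpa [harmonic_eq_sum_Icc] using harmonic_le_one_add_log N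

lemma pi_walkEvent_rpow_le (m N : ℕ) (f : ℕ → ℝ) {ε c : ℝ} (hε : 0 ≤ ε) (hc : 0 < c)
    (hεc : (1 + c) * (m ! * ε) ^ 2 ≤ c ^ 2) :
    (Measure.pi fun _ : Icc 1 N => gaussianReal 0 1).real (walkEvent m N f) ^ (1 + c) ≤
      (Measure.pi fun _ : Icc 1 N => gaussianReal 0 1).real
          (walkEvent m N fun n => f n + ε * (n : ℝ) ^ ((m : ℝ) - 1 / 2)) *
        exp (c * (1 + log N)) := by
  set δ : Icc 1 N → ℝ := fun i => m ! * ε / √(i : ℕ)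
  have hδ : (1 + c) / (2 * c) * ∑ i, δ i ^ 2 ≤ c * (1 + log N) := by
    have hcoef : (1 + c) / (2 * c) * (m ! * ε) ^ 2 ≤ c := by
      rw [div_mul_eq_mul_div, div_le_iff₀ (by positivity)]
      nlinarith
    calc (1 + c) / (2 * c) * ∑ i, δ i ^ 2 ≤ (1 + c) / (2 * c) * ((m ! * ε) ^ 2 * (1 + log N)) := by
          gcongr; exact sum_Icc_div_sqrt_sq_le_mul_one_add_log N _
      _ ≤ c * (1 + log N) := by
          rw [← mul_assoc]
          exact mul_le_mul_of_nonneg_right hcoef (by linarith [log_natCast_nonneg N])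
  have key := (pi_gaussianReal_rpow_one_add_le δ hc (measurableSet_walkEvent m N f)).trans
    (mul_le_mul' (measure_mono (sub_preimage_walkEvent_subset m N f hε))
      (ENNReal.ofReal_le_ofReal (exp_le_exp.2 hδ)))
  have := ENNReal.toReal_mono (ENNReal.mul_ne_top (measure_ne_top _ _) ENNReal.ofReal_ne_top) key
  rwa [← ENNReal.toReal_rpow, ENNReal.toReal_mul, ENNReal.toReal_ofReal (exp_nonneg _)] at this

lemma pi_walkEvent_le_gaussianReal_Ici (m : ℕ) {N : ℕ} (hN : 1 ≤ N) (f : ℕ → ℝ) :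
    Measure.pi (fun _ : Icc 1 N => gaussianReal 0 1) (walkEvent m N f) ≤
      gaussianReal 0 1 (Set.Ici (f 1)) := by
  have h1 : 1 ∈ Icc 1 N := mem_Icc.2 ⟨le_rfl, hN⟩
  calc _ ≤ Measure.pi (fun _ : Icc 1 N => gaussianReal 0 1)
        (Function.eval ⟨1, h1⟩ ⁻¹' Set.Ici (f 1)) := measure_mono fun x hx => by
          have := hx 1 le_rfl hN
          simpa [walkFunctional, pow_partialSums_apply_one,
            Subtype.val_injective.extend_apply x 0 ⟨1, h1⟩] using this
    _ = _ := (measurePreserving_eval _ _).measure_preimage measurableSet_Ici.nullMeasurableSet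

lemma measure_setOf_walk_ge_eq_pi_walkEvent {Ω : Type*} [MeasurableSpace Ω] {μ : Measure Ω}
    {ξ : ℕ → Ω → ℝ} (hmeas : ∀ n, Measurable (ξ n)) {m N : ℕ}
    (hlaw : μ.map (fun ω (i : Icc 1 N) => ξ i ω) = Measure.pi fun _ => gaussianReal 0 1)
    {S : Ω → ℕ → ℝ} (hS : ∀ ω, S ω = (partialSums ^ m) fun k => ξ k ω) (g : ℕ → ℝ) :
    μ {ω | ∀ n, 1 ≤ n → n ≤ N → g n ≤ S ω n} =
      Measure.pi (fun _ : Icc 1 N => gaussianReal 0 1) (walkEvent m N g) := by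
  rw [← hlaw, Measure.map_apply (measurable_pi_lambda (fun ω (i : Icc 1 N) => ξ i ω)
    fun i => hmeas i) (measurableSet_walkEvent m N g)]
  congr 1
  ext ω
  refine forall_congr' fun n => forall_congr' fun h1 => forall_congr' fun h2 => ?_
  beta_reduce
  rw [hS, walkFunctional_apply_of_eq (mem_Icc.2 ⟨h1, h2⟩) (y := fun k => ξ k ω) fun i => rfl]

lemma rpow_one_add_mul_rpow_neg_le {p r Q c N : ℝ} (hN : 1 ≤ N) (hp : 0 ≤ p)
    (hpQ : p ≤ Q) (hQ0 : 0 < Q) (hQ1 : Q < 1) (hc : 0 ≤ c)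
    (h : p ^ (1 + c) ≤ r * exp (c * (1 + log N))) :
    p ^ (1 + c * (1 + 1 / -log Q)) * N ^ (-(c * (1 + 1 / -log Q))) ≤ r := by
  have hL : 0 < -log Q := neg_pos.2 (log_neg hQ0 hQ1)
  have hlogQ : log Q ≠ 0 := by linarith
  have hN0 : 0 < N := by linarith
  have hpL : p ^ (c / -log Q) ≤ exp (-c) := by
    calc p ^ (c / -log Q) ≤ Q ^ (c / -log Q) := by gcongr
      _ = exp (-c) := by rw [rpow_def_of_pos hQ0]; congr 1; field_simp
  have hNc : N ^ (-(c * (1 + 1 / -log Q))) ≤ N ^ (-c) :=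
    rpow_le_rpow_of_exponent_le hN
      (neg_le_neg (le_mul_of_one_le_right hc (by linarith [one_div_nonneg.2 hL.le])))
  calc p ^ (1 + c * (1 + 1 / -log Q)) * N ^ (-(c * (1 + 1 / -log Q)))
      = p ^ (1 + c) * p ^ (c / -log Q) * N ^ (-(c * (1 + 1 / -log Q))) := by
        rw [← rpow_add' hp (by positivity)]; ring_nf
    _ ≤ p ^ (1 + c) * exp (-c) * N ^ (-c) := by gcongr
    _ = p ^ (1 + c) / exp (c * (1 + log N)) := by
        rw [rpow_def_of_pos hN0, mul_assoc, ← exp_add, div_eq_mul_inv, ← exp_neg]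
        ring_nf
    _ ≤ r := by rwa [div_le_iff₀ (exp_pos _)]

/-- Small-drift comparison for the integrated Gaussian random walk of order `m`:
for every `ε > 0` there is `c_ε > 0`, with `c_ε → 0` as `ε → 0`, such that
`P(S_n^{(m)} ≥ f_n + ε n^{m-1/2} ∀ n ≤ N) ≥ P(S_n^{(m)} ≥ f_n ∀ n ≤ N)^{1+c_ε} N^{-c_ε}`. -/
theorem stmt13 {Ω : Type*} [MeasureSpace Ω] [IsProbabilityMeasure (ℙ : Measure Ω)]
    (m : ℕ) (hm : 0 < m)
    (ξ : ℕ → Ω → ℝ) (hmeas : ∀ n, Measurable (ξ n))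
    (hgauss : ∀ n, Measure.map (ξ n) ℙ = gaussianReal 0 1)
    (hindep : iIndepFun ξ ℙ)
    (S : ℕ → ℕ → Ω → ℝ)
    (hS1 : ∀ (n : ℕ) (ω : Ω), S 1 n ω = ∑ i ∈ Finset.Icc 1 n, ξ i ω)
    (hSrec : ∀ (M n : ℕ) (ω : Ω), S (M + 2) n ω = ∑ k ∈ Finset.Icc 1 n, S (M + 1) k ω)
    (f : ℕ → ℝ) :
    ∃ cfun : ℝ → ℝ, (∀ ε > (0 : ℝ), 0 < cfun ε) ∧
      Tendsto cfun (nhdsWithin 0 (Set.Ioi 0)) (nhds 0) ∧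
      ∀ ε > (0 : ℝ), ∀ N : ℕ,
        (ℙ {ω | ∀ n : ℕ, 1 ≤ n → n ≤ N →
            f n + ε * (n : ℝ) ^ ((m : ℝ) - 1 / 2) ≤ S m n ω}).toReal ≥
          (ℙ {ω | ∀ n : ℕ, 1 ≤ n → n ≤ N → f n ≤ S m n ω}).toReal ^ (1 + cfun ε) *
            (N : ℝ) ^ (-(cfun ε)) := by
  set Q := (gaussianReal 0 1).real (Set.Ici (f 1))
  have hQ0 : 0 < Q := gaussianReal_real_pos 0 one_ne_zero (by simp)
  have hQ1 : Q < 1 := gaussianReal_real_Ici_lt_one 0 one_ne_zero (f 1)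
  have hL : 0 < -log Q := neg_pos.2 (log_neg hQ0 hQ1)
  have hS : ∀ ω, (fun n => S m n ω) = (partialSums ^ m) fun k => ξ k ω := fun ω => by
    obtain ⟨M, rfl⟩ := Nat.exists_eq_add_one_of_ne_zero hm.ne'
    exact eq_pow_partialSums_of_rec (S := fun M n => S M n ω) (hS1 · ω) (hSrec · · ω) M
  refine ⟨fun ε => (m ! * ε + (m ! * ε) ^ 2) * (1 + 1 / -log Q), fun ε hε => by positivity,
    ?_, fun ε hε N => ?_⟩
  · have hcont : Continuous fun ε : ℝ => (m ! * ε + (m ! * ε) ^ 2) * (1 + 1 / -log Q) := by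
      fun_prop
    simpa using (hcont.tendsto 0).mono_left nhdsWithin_le_nhds
  rcases Nat.eq_zero_or_pos N with rfl | hN
  · rw [Nat.cast_zero, zero_rpow (neg_ne_zero.2 (by positivity)), mul_zero]
    exact ENNReal.toReal_nonneg
  have ha : 0 ≤ (m ! : ℝ) * ε := by positivity
  have hlaw := map_eq_pi_of_iIndepFun hmeas hgauss hindep (Icc 1 N)
  rw [measure_setOf_walk_ge_eq_pi_walkEvent hmeas hlaw hS,
    measure_setOf_walk_ge_eq_pi_walkEvent hmeas hlaw hS]
  exact rpow_one_add_mul_rpow_neg_le (Nat.one_le_cast.2 hN) ENNReal.toReal_nonneg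
    (ENNReal.toReal_mono (measure_ne_top _ _) (pi_walkEvent_le_gaussianReal_Ici m hN f)) hQ0 hQ1
    (by positivity)
    (pi_walkEvent_rpow_le m N f hε.le (by positivity) (by nlinarith [pow_nonneg ha 3]))
end
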